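/- There is no ℝ-linear operator D on C²((0,∞)) satisfying the Leibniz rule such that D(x^β) = (Γ(β+1)/Γ(β+1−α))·x^(β−α) for all β ∈ {1, 2} and some non-integer α ∈ (0,1). -/

import Mathlib

/-! Leibniz applied to `t ^ 2 = t * t` gives `D (t ^ 2) 1 = 2 * D t 1`. The power rule instead gives
`D (t ^ 2) 1 = 2 / (2 - α) * D t 1`, via `Γ (3 - α) = (2 - α) * Γ (2 - α)`, and `D t 1 = 1 / Γ (2 - α) ≠ 0`;
so `2 - α = 1`. -/

open Set Real

theorem Real.Gamma_add_one_div_Gamma_add_one_sub {s α : ℝ} (hs : s ≠ 0) (hsα : s - α ≠ 0) :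
    Gamma (s + 1) / Gamma (s + 1 - α) = s / (s - α) * (Gamma s / Gamma (s - α)) := by
  rw [add_sub_right_comm, Gamma_add_one hs, Gamma_add_one hsα, mul_div_mul_comm]

theorem apply_rpow_two_of_leibniz {D : (ℝ → ℝ) → ℝ → ℝ}
    (hLeib : ∀ f g : ℝ → ℝ, ContDiffOn ℝ 2 f (Ioi 0) → ContDiffOn ℝ 2 g (Ioi 0) →
      D (fun x => f x * g x) = fun x => D f x * g x + f x * D g x) (x : ℝ) :
    D (fun t => t ^ (2 : ℝ)) x = 2 * x * D (fun t => t ^ (1 : ℝ)) x := by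
  have hid : ContDiffOn ℝ 2 (fun t : ℝ => t ^ (1 : ℝ)) (Ioi 0) := by
    simp only [rpow_one]
    exact contDiffOn_id
  have hsq : (fun t : ℝ => t ^ (2 : ℝ)) = fun t => t ^ (1 : ℝ) * t ^ (1 : ℝ) := by
    funext t
    rw [rpow_two, rpow_one, sq]
  rw [hsq, congrFun (hLeib _ _ hid hid) x, rpow_one]
  ring

theorem fractional_power_rule_incompatible_with_leibniz
    (α : ℝ) (hα : α ∈ Ioo (0:ℝ) 1) :
    ¬ ∃ D : (ℝ → ℝ) → (ℝ → ℝ),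
      (∀ (c₁ c₂ : ℝ) (f g : ℝ → ℝ),
        ContDiffOn ℝ 2 f (Ioi (0:ℝ)) → ContDiffOn ℝ 2 g (Ioi (0:ℝ)) →
        D (fun x => c₁ * f x + c₂ * g x) = fun x => c₁ * D f x + c₂ * D g x) ∧
      (∀ f g : ℝ → ℝ, ContDiffOn ℝ 2 f (Ioi (0:ℝ)) → ContDiffOn ℝ 2 g (Ioi (0:ℝ)) →
        D (fun x => f x * g x) = fun x => D f x * g x + f x * D g x) ∧
      (∀ β ∈ ({1, 2} : Set ℝ), ∀ x : ℝ, 0 < x →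
        D (fun t => t ^ β) x =
          (Real.Gamma (β + 1) / Real.Gamma (β + 1 - α)) * x ^ (β - α)) := by
  rintro ⟨D, -, hLeib, hpow⟩
  obtain ⟨-, hα1⟩ := hα
  have hsq := apply_rpow_two_of_leibniz hLeib 1
  rw [hpow 2 (by simp) 1 one_pos, hpow 1 (by simp) 1 one_pos,
    Gamma_add_one_div_Gamma_add_one_sub two_ne_zero (by linarith)] at hsq
  have hΓ : 0 < Gamma 2 / Gamma (2 - α) := by
    have := Gamma_pos_of_pos (show 0 < 2 - α by linarith)
    positivity
  simp only [one_rpow, mul_one, one_add_one_eq_two] at hsq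
  have hfactor := mul_right_cancel₀ hΓ.ne' hsq
  rw [div_eq_iff (by linarith)] at hfactor
  linarith
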